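/- Suppose that either b(x)/x → +∞ as x → 0⁺, or b(x)/x → λ as x → 0⁺ for some λ ∈ (0, ∞) with λ·a > 1. Then there exists β > 0 satisfying the fixed point equation β·C(β) = 1 (i.e. the mean-field equations admit at least one non-trivial stationary distribution, whose density is (1/(C(β)(aβ − u)))·exp(−∫₀^u b(v)/(aβ − v) dv) on [0, aβ)). -/

import Mathlib

/-!
Write `C(β) = ∫₀¹ H_β` with `H_β(x) = (1 - x)⁻¹ exp (-∫₀ˣ b(aβy) / (1 - y) dy)`.
Near `0` we have `b z ≥ μ z` for some `μ` with `μ a > 1`, so for small `β` the exponent is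
at least `μaβ (-log (1 - x) - x)`, whence `H_β(x) ≤ e^{μaβ} (1 - x)^{μaβ - 1}` and
`β C(β) ≤ e^{μaβ} / (μa) < 1`. For large `β` the exponent is at most `b(2a) (-log (1 - x))`
on `[0, 2/β]`, whence `β C(β) ≥ 2 (1 - 2/β)^{b(2a)} → 2`. Monotonicity and positivity of `b`
give `b(aβy) ≥ c (2y - 1)` with `c > 0` uniformly for `β` near any `β₀ > 0`, hence the
integrable majorant `e^{2c} (1 - x)^{c - 1}` of `H_β`: `C` is continuous on `(0, ∞)` by
dominated convergence, and the intermediate value theorem produces `β C(β) = 1`.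
-/

open MeasureTheory Real Filter Set

noncomputable def Cfun (a : ℝ) (b : ℝ → ℝ) (β : ℝ) : ℝ :=
  ∫ x in (0:ℝ)..1, (1 - x)⁻¹ * Real.exp (-∫ y in (0:ℝ)..x, b (a * β * y) / (1 - y))

open intervalIntegral
open scoped Interval Topology

noncomputable def cIntegrand (g : ℝ → ℝ) (x : ℝ) : ℝ :=
  (1 - x)⁻¹ * exp (-∫ y in (0:ℝ)..x, g y / (1 - y))

lemma lt_one_of_mem_uIcc_zero {x y : ℝ} (hx : x < 1) (hy : y ∈ uIcc 0 x) : y < 1 :=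
  hy.2.trans_lt (max_lt one_pos hx)

lemma integral_affine_div_one_sub (m k : ℝ) {x : ℝ} (hx : x < 1) :
    ∫ y in (0:ℝ)..x, (m * y - k) / (1 - y) = (m - k) * -log (1 - x) - m * x := by
  have hderiv : ∀ y ∈ uIcc 0 x, HasDerivAt (fun y => (m - k) * -log (1 - y) - m * y)
      ((m * y - k) / (1 - y)) y := by
    intro y hy
    have hy1 : 1 - y ≠ 0 := (sub_pos.2 (lt_one_of_mem_uIcc_zero hx hy)).ne'
    have hlog : HasDerivAt (fun y => log (1 - y)) (-1 / (1 - y)) y := by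
      simpa using ((hasDerivAt_id y).const_sub 1).log hy1
    refine ((hlog.neg.const_mul (m - k)).sub ((hasDerivAt_id y).const_mul m)).congr_deriv ?_
    field_simp
    ring
  have hcont : ContinuousOn (fun y => (m * y - k) / (1 - y)) (uIcc 0 x) :=
    (by fun_prop : Continuous fun y : ℝ => m * y - k).continuousOn.div (by fun_prop)
      fun y hy => (sub_pos.2 (lt_one_of_mem_uIcc_zero hx hy)).ne'
  rw [integral_eq_sub_of_hasDerivAt hderiv hcont.intervalIntegrable]
  simp

lemma intervalIntegrable_one_sub_rpow {r : ℝ} (hr : -1 < r) :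
    IntervalIntegrable (fun x : ℝ => (1 - x) ^ r) volume 0 1 := by
  simpa using ((intervalIntegrable_rpow' hr (a := 0) (b := 1)).comp_sub_left 1).symm

lemma integral_one_sub_rpow {r : ℝ} (hr : -1 < r) :
    ∫ x in (0:ℝ)..1, (1 - x) ^ r = 1 / (r + 1) := by
  rw [integral_comp_sub_left (fun x : ℝ => x ^ r), sub_self, sub_zero,
    integral_rpow (Or.inl hr), one_rpow, zero_rpow (by linarith)]
  ring

section cIntegrand

variable {g : ℝ → ℝ}

lemma continuousOn_div_one_sub (hg : Continuous g) :
    ContinuousOn (fun y => g y / (1 - y)) (Iio 1) :=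
  hg.continuousOn.div (by fun_prop) fun _ hy => (sub_pos.2 hy).ne'

lemma intervalIntegrable_div_one_sub (hg : Continuous g) {x : ℝ} (hx : x < 1) :
    IntervalIntegrable (fun y => g y / (1 - y)) volume 0 x :=
  ((continuousOn_div_one_sub hg).mono fun _ hy => lt_one_of_mem_uIcc_zero hx hy).intervalIntegrable

lemma integral_div_one_sub_mono {f : ℝ → ℝ} (hf : Continuous f) (hg : Continuous g) {x : ℝ}
    (hx₀ : 0 ≤ x) (hx₁ : x < 1) (hfg : ∀ y ∈ Icc 0 x, f y ≤ g y) :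
    ∫ y in (0:ℝ)..x, f y / (1 - y) ≤ ∫ y in (0:ℝ)..x, g y / (1 - y) :=
  integral_mono_on hx₀ (intervalIntegrable_div_one_sub hf hx₁)
    (intervalIntegrable_div_one_sub hg hx₁) fun y hy =>
      div_le_div_of_nonneg_right (hfg y hy) (by linarith [hy.2])

lemma continuousOn_integral_div_one_sub (hg : Continuous g) :
    ContinuousOn (fun x => ∫ y in (0:ℝ)..x, g y / (1 - y)) (Iio 1) := fun x hx =>
  (integral_hasDerivAt_right (intervalIntegrable_div_one_sub hg hx)
    ((continuousOn_div_one_sub hg).stronglyMeasurableAtFilter isOpen_Iio x hx)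
    ((continuousOn_div_one_sub hg).continuousAt (isOpen_Iio.mem_nhds hx))
    ).continuousAt.continuousWithinAt

lemma cIntegrand_nonneg (g : ℝ → ℝ) {x : ℝ} (hx : x ≤ 1) : 0 ≤ cIntegrand g x :=
  mul_nonneg (inv_nonneg.2 (by linarith)) (exp_pos _).le

lemma continuousOn_cIntegrand (hg : Continuous g) : ContinuousOn (cIntegrand g) (Iio 1) := by
  have hinv : ContinuousOn (fun x : ℝ => (1 - x)⁻¹) (Iio 1) :=
    (continuous_const.sub continuous_id).continuousOn.inv₀ fun _ hx => (sub_pos.2 hx).ne'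
  exact hinv.mul (continuousOn_integral_div_one_sub hg).neg.rexp

lemma aestronglyMeasurable_cIntegrand (hg : Continuous g) :
    AEStronglyMeasurable (cIntegrand g) (volume.restrict (Ι 0 1)) := by
  rw [uIoc_of_le zero_le_one, ← Measure.restrict_congr_set Ioo_ae_eq_Ioc]
  exact ((continuousOn_cIntegrand hg).mono fun _ hx => hx.2).aestronglyMeasurable measurableSet_Ioo

lemma cIntegrand_le (hg : Continuous g) {m k : ℝ} (hm : 0 ≤ m)
    (hmk : ∀ y ∈ Ico (0:ℝ) 1, m * y - k ≤ g y) {x : ℝ} (hx : x ∈ Icc (0:ℝ) 1) :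
    cIntegrand g x ≤ exp m * (1 - x) ^ (m - k - 1) := by
  rcases hx.2.eq_or_lt with rfl | hx₁
  · simp only [cIntegrand, sub_self, inv_zero, zero_mul]
    positivity
  have h1x : 0 < 1 - x := sub_pos.2 hx₁
  have hF : (m - k) * -log (1 - x) - m * x ≤ ∫ y in (0:ℝ)..x, g y / (1 - y) := by
    rw [← integral_affine_div_one_sub m k hx₁]
    exact integral_div_one_sub_mono (by fun_prop) hg hx.1 hx₁
      fun y hy => hmk y ⟨hy.1, hy.2.trans_lt hx₁⟩
  calc cIntegrand g x ≤ (1 - x)⁻¹ * exp (log (1 - x) * (m - k) + m) := by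
        unfold cIntegrand
        gcongr
        nlinarith [hx.2]
    _ = exp m * (1 - x) ^ (m - k - 1) := by
        rw [exp_add, ← rpow_def_of_pos h1x, rpow_sub_one h1x.ne']
        ring

lemma one_sub_rpow_le_cIntegrand (hg : Continuous g) {K x : ℝ} (hx : x ∈ Ico (0:ℝ) 1)
    (hK : ∀ y ∈ Icc 0 x, g y ≤ K) : (1 - x) ^ K ≤ cIntegrand g x := by
  have h1x : 0 < 1 - x := sub_pos.2 hx.2
  have hF : ∫ y in (0:ℝ)..x, g y / (1 - y) ≤ K * -log (1 - x) := by
    have := integral_affine_div_one_sub 0 (-K) hx.2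
    simp only [zero_mul, zero_sub, neg_neg, sub_zero] at this
    rw [← this]
    exact integral_div_one_sub_mono hg continuous_const hx.1 hx.2 hK
  calc (1 - x) ^ K = exp (-(K * -log (1 - x))) := by
        rw [rpow_def_of_pos h1x]
        ring_nf
    _ ≤ exp (-∫ y in (0:ℝ)..x, g y / (1 - y)) := by gcongr
    _ ≤ cIntegrand g x :=
        le_mul_of_one_le_left (exp_pos _).le ((one_le_inv₀ h1x).2 (by linarith [hx.1]))

lemma intervalIntegrable_cIntegrand (hg : Continuous g) {m k : ℝ} (hm : 0 ≤ m) (hkm : k < m)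
    (hmk : ∀ y ∈ Ico (0:ℝ) 1, m * y - k ≤ g y) :
    IntervalIntegrable (cIntegrand g) volume 0 1 := by
  refine ((intervalIntegrable_one_sub_rpow (by linarith : -1 < m - k - 1)).const_mul
    (exp m)).mono_fun (aestronglyMeasurable_cIntegrand hg) ?_
  rw [uIoc_of_le zero_le_one]
  filter_upwards [ae_restrict_mem measurableSet_Ioc] with x hx
  rw [norm_of_nonneg (cIntegrand_nonneg g hx.2)]
  exact (cIntegrand_le hg hm hmk (Ioc_subset_Icc_self hx)).trans (le_norm_self _)

lemma integral_cIntegrand_le (hg : Continuous g) {m k : ℝ} (hm : 0 ≤ m) (hkm : k < m)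
    (hmk : ∀ y ∈ Ico (0:ℝ) 1, m * y - k ≤ g y) :
    ∫ x in (0:ℝ)..1, cIntegrand g x ≤ exp m / (m - k) := by
  have hr : -1 < m - k - 1 := by linarith
  calc ∫ x in (0:ℝ)..1, cIntegrand g x ≤ ∫ x in (0:ℝ)..1, exp m * (1 - x) ^ (m - k - 1) :=
        integral_mono_on zero_le_one (intervalIntegrable_cIntegrand hg hm hkm hmk)
          ((intervalIntegrable_one_sub_rpow hr).const_mul _) fun x hx => cIntegrand_le hg hm hmk hx
    _ = exp m / (m - k) := by
        rw [intervalIntegral.integral_const_mul, integral_one_sub_rpow hr, sub_add_cancel]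
        ring

lemma mul_one_sub_rpow_le_integral_cIntegrand (hg : Continuous g)
    (hint : IntervalIntegrable (cIntegrand g) volume 0 1) {t K : ℝ} (ht : t ∈ Ico (0:ℝ) 1)
    (hK₀ : 0 ≤ K) (hK : ∀ y ∈ Icc 0 t, g y ≤ K) :
    t * (1 - t) ^ K ≤ ∫ x in (0:ℝ)..1, cIntegrand g x := by
  have hsub : uIcc 0 t ⊆ uIcc (0:ℝ) 1 :=
    uIcc_subset_uIcc left_mem_uIcc (by rw [uIcc_of_le zero_le_one]; exact Ico_subset_Icc_self ht)
  calc t * (1 - t) ^ K = ∫ _ in (0:ℝ)..t, (1 - t) ^ K := by simp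
    _ ≤ ∫ x in (0:ℝ)..t, cIntegrand g x := by
        refine integral_mono_on ht.1 intervalIntegrable_const (hint.mono_set hsub) fun x hx => ?_
        have hx' : x ∈ Ico (0:ℝ) 1 := ⟨hx.1, hx.2.trans_lt ht.2⟩
        calc (1 - t) ^ K ≤ (1 - x) ^ K :=
              rpow_le_rpow (by linarith [ht.2]) (by linarith [hx.2]) hK₀
          _ ≤ cIntegrand g x :=
              one_sub_rpow_le_cIntegrand hg hx' fun y hy => hK y ⟨hy.1, hy.2.trans hx.2⟩
    _ ≤ ∫ x in (0:ℝ)..1, cIntegrand g x := by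
        refine integral_mono_interval le_rfl ht.1 ht.2.le ?_ hint
        filter_upwards [ae_restrict_mem measurableSet_Ioc] with x hx
        exact cIntegrand_nonneg g hx.2

lemma continuous_parametric_cIntegrand {X : Type*} [TopologicalSpace X] {G : X → ℝ → ℝ}
    (hG : Continuous G.uncurry) {x : ℝ} (hx : x ∈ Ico (0:ℝ) 1) :
    Continuous fun p => cIntegrand (G p) x := by
  -- on `[0, x]` the denominator `1 - y` equals `max (1 - y) (1 - x)`, which never vanishes
  have heq : ∀ p, ∫ y in (0:ℝ)..x, G p y / (1 - y) =
      ∫ y in (0:ℝ)..x, G p y / max (1 - y) (1 - x) := fun p =>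
    integral_congr fun y hy => by
      rw [uIcc_of_le hx.1] at hy
      rw [max_eq_left (by linarith [hy.2])]
  have hint : Continuous fun p => ∫ y in (0:ℝ)..x, G p y / (1 - y) := by
    simp only [heq]
    exact continuous_parametric_intervalIntegral_of_continuous'
      (hG.div (by fun_prop) fun _ => (lt_max_of_lt_right (by linarith [hx.2])).ne') 0 x
  exact continuous_const.mul hint.neg.rexp

end cIntegrand

lemma Cfun_eq_integral_cIntegrand (a : ℝ) (b : ℝ → ℝ) (β : ℝ) :
    Cfun a b β = ∫ x in (0:ℝ)..1, cIntegrand (fun y => b (a * β * y)) x := rfl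

section Cfun

variable {a : ℝ} {b : ℝ → ℝ}

lemma two_mul_mul_sub_le_of_monotoneOn (hb_mono : MonotoneOn b (Ici 0)) (hb0 : 0 ≤ b 0)
    {z₀ z y : ℝ} (hz₀ : 0 ≤ z₀) (hz : 2 * z₀ ≤ z) (hy : y ∈ Ico (0:ℝ) 1) :
    2 * b z₀ * y - b z₀ ≤ b (z * y) := by
  have hb_nonneg : ∀ z, 0 ≤ z → 0 ≤ b z := fun z hz =>
    hb0.trans (hb_mono self_mem_Ici hz hz)
  have hbz₀ := hb_nonneg z₀ hz₀
  rcases lt_or_ge y (1 / 2) with hy₂ | hy₂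
  · nlinarith [hb_nonneg (z * y) (mul_nonneg (by linarith) hy.1)]
  · have hzy : z₀ ≤ z * y := by
      nlinarith [mul_nonneg (sub_nonneg.2 hz) (sub_nonneg.2 hy₂),
        mul_nonneg hz₀ (sub_nonneg.2 hy₂)]
    have : b z₀ ≤ b (z * y) := hb_mono hz₀ (hz₀.trans hzy) hzy
    nlinarith [hy.2]

lemma continuousAt_Cfun (ha : 0 < a) (hb_cont : Continuous b) (hb_mono : MonotoneOn b (Ici 0))
    (hb0 : 0 ≤ b 0) (hb_pos : ∀ x > (0:ℝ), 0 < b x) {β₀ : ℝ} (hβ₀ : 0 < β₀) :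
    ContinuousAt (Cfun a b) β₀ := by
  set c := b (a * β₀ / 4)
  have hc : 0 < c := hb_pos _ (by positivity)
  have hminor : ∀ β ≥ β₀ / 2, ∀ y ∈ Ico (0:ℝ) 1, 2 * c * y - c ≤ b (a * β * y) :=
    fun β hβ y hy => two_mul_mul_sub_le_of_monotoneOn hb_mono hb0 (by positivity)
      (by nlinarith) hy
  show ContinuousAt (fun β => ∫ x in (0:ℝ)..1, cIntegrand (fun y => b (a * β * y)) x) β₀
  refine continuousAt_of_dominated_interval
    (bound := fun x => exp (2 * c) * (1 - x) ^ (2 * c - c - 1))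
    (Eventually.of_forall fun β => aestronglyMeasurable_cIntegrand (by fun_prop)) ?_
    ((intervalIntegrable_one_sub_rpow (by linarith)).const_mul _) ?_
  · filter_upwards [Ici_mem_nhds (half_lt_self hβ₀)] with β hβ
    refine ae_of_all _ fun x hx => ?_
    rw [uIoc_of_le zero_le_one] at hx
    rw [norm_of_nonneg (cIntegrand_nonneg _ hx.2)]
    exact cIntegrand_le (by fun_prop) (by positivity) (hminor β hβ) (Ioc_subset_Icc_self hx)
  · filter_upwards [Measure.ae_ne volume 1] with x hx₁ hx
    rw [uIoc_of_le zero_le_one] at hx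
    exact (continuous_parametric_cIntegrand (G := fun β y => b (a * β * y)) (by fun_prop)
      ⟨hx.1.le, lt_of_le_of_ne hx.2 hx₁⟩).continuousAt

lemma exists_slope_minorant (ha : 0 < a)
    (hslope : Tendsto (fun x => b x / x) (nhdsWithin 0 (Set.Ioi 0)) atTop ∨
      ∃ lam : ℝ, 0 < lam ∧ 1 < lam * a ∧
        Tendsto (fun x => b x / x) (nhdsWithin 0 (Set.Ioi 0)) (nhds lam)) :
    ∃ μ, 1 < μ * a ∧ ∀ᶠ z in 𝓝[>] 0, μ * z ≤ b z := by
  obtain ⟨μ, hμa, hμ⟩ : ∃ μ, 1 < μ * a ∧ ∀ᶠ z in 𝓝[>] 0, μ < b z / z := by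
    rcases hslope with h | ⟨lam, -, hlam, h⟩
    · exact ⟨2 / a, by field_simp; norm_num, h.eventually_gt_atTop _⟩
    · obtain ⟨μ, hμ₁, hμ₂⟩ := exists_between ((div_lt_iff₀ ha).2 hlam)
      exact ⟨μ, (div_lt_iff₀ ha).1 hμ₁, h.eventually (eventually_gt_nhds hμ₂)⟩
  refine ⟨μ, hμa, ?_⟩
  filter_upwards [hμ, self_mem_nhdsWithin] with z hz hz₀
  exact ((lt_div_iff₀ hz₀).1 hz).le

lemma eventually_mul_Cfun_lt_one (ha : 0 < a) (hb_cont : Continuous b) (hb0 : 0 ≤ b 0) {μ : ℝ}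
    (hμa : 1 < μ * a) (hμ : ∀ᶠ z in 𝓝[>] 0, μ * z ≤ b z) :
    ∀ᶠ β in 𝓝[>] 0, β * Cfun a b β < 1 := by
  obtain ⟨z₀, hz₀, hμz₀⟩ := mem_nhdsGT_iff_exists_Ioc_subset.1 hμ
  have hlim : Tendsto (fun β => exp (μ * a * β) / (μ * a)) (𝓝 0) (𝓝 (1 / (μ * a))) := by
    simpa using ((continuous_const.mul continuous_id).rexp.div_const (μ * a)).tendsto 0
  filter_upwards [nhdsWithin_le_nhds (hlim.eventually (eventually_lt_nhds
    ((div_lt_one (by linarith)).2 hμa))), Ioo_mem_nhdsGT (div_pos hz₀ ha)] with β hlt hβ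
  have hm : 0 < μ * a * β := by nlinarith [hβ.1]
  have hminor : ∀ y ∈ Ico (0:ℝ) 1, μ * a * β * y ≤ b (a * β * y) := by
    intro y hy
    rcases hy.1.eq_or_lt with rfl | hy₀
    · simpa using hb0
    · have hz : a * β * y ∈ Ioc 0 z₀ := by
        refine ⟨by have := hβ.1; positivity, ?_⟩
        have : a * β < z₀ := by have := hβ.2; rwa [lt_div_iff₀ ha, mul_comm] at this
        exact (mul_le_of_le_one_right (by have := hβ.1; positivity) hy.2.le).trans this.le
      have : μ * (a * β * y) ≤ b (a * β * y) := hμz₀ hz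
      linarith
  have hC : Cfun a b β ≤ exp (μ * a * β) / (μ * a * β) := by
    simpa [Cfun_eq_integral_cIntegrand] using
      integral_cIntegrand_le (k := 0) (by fun_prop) hm.le hm (by simpa using hminor)
  calc β * Cfun a b β ≤ β * (exp (μ * a * β) / (μ * a * β)) := by gcongr; exact hβ.1.le
    _ = exp (μ * a * β) / (μ * a) := by
        have := hβ.1.ne'
        field_simp
    _ < 1 := by simpa using hlt

lemma eventually_one_lt_mul_Cfun (ha : 0 < a) (hb_cont : Continuous b)
    (hb_mono : MonotoneOn b (Ici 0)) (hb0 : 0 ≤ b 0) (hb_pos : ∀ x > (0:ℝ), 0 < b x) :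
    ∀ᶠ β in atTop, 1 < β * Cfun a b β := by
  set K := b (2 * a)
  have hK : 0 ≤ K := (hb_pos _ (by positivity)).le
  have hlim : Tendsto (fun β : ℝ => 2 * (1 - 2 / β) ^ K) atTop (𝓝 2) := by
    have h : Tendsto (fun β : ℝ => 1 - 2 / β) atTop (𝓝 1) := by
      simpa using tendsto_const_nhds.sub ((tendsto_const_nhds (x := (2:ℝ))).div_atTop tendsto_id)
    simpa using (h.rpow_const (Or.inl one_ne_zero)).const_mul 2
  filter_upwards [hlim.eventually (eventually_gt_nhds one_lt_two), eventually_gt_atTop 2]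
    with β hlt hβ
  have hβ₀ : 0 < β := by linarith
  have ht : 2 / β ∈ Ico (0:ℝ) 1 := ⟨by positivity, (div_lt_one hβ₀).2 hβ⟩
  have hint : IntervalIntegrable (cIntegrand fun y => b (a * β * y)) volume 0 1 := by
    have hc : 0 < b (a * β / 4) := hb_pos _ (by positivity)
    exact intervalIntegrable_cIntegrand (m := 2 * b (a * β / 4)) (k := b (a * β / 4))
      (by fun_prop) (by positivity) (by linarith)
      fun y hy => two_mul_mul_sub_le_of_monotoneOn hb_mono hb0 (by positivity)
        (by nlinarith [mul_pos ha hβ₀]) hy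
  have hmajor : ∀ y ∈ Icc 0 (2 / β), b (a * β * y) ≤ K := by
    intro y hy
    have : a * β * y ≤ 2 * a := by
      calc a * β * y ≤ a * β * (2 / β) := by gcongr; exact hy.2
        _ = 2 * a := by field_simp
    exact hb_mono (mul_nonneg (by positivity) hy.1) (by positivity : (0:ℝ) ≤ 2 * a) this
  calc 1 < 2 * (1 - 2 / β) ^ K := hlt
    _ = β * (2 / β * (1 - 2 / β) ^ K) := by field_simp
    _ ≤ β * Cfun a b β := by
        rw [Cfun_eq_integral_cIntegrand]
        gcongr
        exact mul_one_sub_rpow_le_integral_cIntegrand (by fun_prop) hint ht hK hmajor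

end Cfun

/-- if `b(x)/x → ∞` as `x → 0⁺`, or `b(x)/x → λ` as `x → 0⁺` with
`λ ∈ (0,∞)` and `λ a > 1`, then the fixed point equation `β C(β) = 1` has a
solution `β > 0`, i.e. there is at least one non-trivial stationary distribution. -/
theorem exists_nontrivial_stationary_distribution
    (a : ℝ) (ha : 0 < a) (b : ℝ → ℝ)
    (hb_cont : Continuous b) (hb_mono : MonotoneOn b (Set.Ici 0))
    (hb0 : 0 ≤ b 0) (hb_pos : ∀ x > (0:ℝ), 0 < b x)
    (hslope : Tendsto (fun x => b x / x) (nhdsWithin 0 (Set.Ioi 0)) atTop ∨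
      ∃ lam : ℝ, 0 < lam ∧ 1 < lam * a ∧
        Tendsto (fun x => b x / x) (nhdsWithin 0 (Set.Ioi 0)) (nhds lam)) :
    ∃ β : ℝ, 0 < β ∧ β * Cfun a b β = 1 := by
  obtain ⟨μ, hμa, hμ⟩ := exists_slope_minorant ha hslope
  obtain ⟨β₁, hsmall, hβ₁⟩ :=
    ((eventually_mul_Cfun_lt_one ha hb_cont hb0 hμa hμ).and self_mem_nhdsWithin).exists
  obtain ⟨β₂, hβ₁₂, hbig⟩ := ((eventually_gt_atTop β₁).and
    (eventually_one_lt_mul_Cfun ha hb_cont hb_mono hb0 hb_pos)).exists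
  have hcont : ContinuousOn (fun β => β * Cfun a b β) (Icc β₁ β₂) := fun β hβ =>
    (continuousAt_id.mul (continuousAt_Cfun ha hb_cont hb_mono hb0 hb_pos
      (lt_of_lt_of_le hβ₁ hβ.1))).continuousWithinAt
  obtain ⟨β, hβ, hβC⟩ := intermediate_value_Icc hβ₁₂.le hcont ⟨hsmall.le, hbig.le⟩
  exact ⟨β, lt_of_lt_of_le hβ₁ hβ.1, hβC⟩
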